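/- arXiv:2107.00960 — 5 statements merged into one kernel-verified Lean document; each statement's English description precedes it below -/
import Mathlib

section
/- Let (C_k)_{k≥1} be a sequence of smooth bivariate copulas each of which is exchangeable, i.e. C_k(u,v) = C_k(v,u) for all u,v ∈ [0,1] and all k. Then the forward and backward Rosenblatt functions satisfy R^{(2)}_k(ū, x) = R^{(1)}_k(u, x) for every k ≥ 1, every u ∈ (0,1)^k and every x ∈ (0,1), where ū = (u_k,…,u_1) denotes the reversal of u = (u_1,…,u_k). -/
open MeasureTheory Set

noncomputable section

/-- A smooth bivariate copula: `C : [0,1]² → [0,1]`, `C^∞` on `[0,1]²`, with the copula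
boundary conditions and a strictly positive density `c = ∂²C/∂u∂v` on `(0,1)²`. -/
structure SmoothBivCopula where
  toFun : ℝ → ℝ → ℝ
  smooth : ContDiffOn ℝ (⊤ : ℕ∞) (fun p : ℝ × ℝ => toFun p.1 p.2)
      (Set.Icc (0:ℝ) 1 ×ˢ Set.Icc (0:ℝ) 1)
  zero_left : ∀ v ∈ Set.Icc (0:ℝ) 1, toFun 0 v = 0
  zero_right : ∀ u ∈ Set.Icc (0:ℝ) 1, toFun u 0 = 0
  one_left : ∀ v ∈ Set.Icc (0:ℝ) 1, toFun 1 v = v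
  one_right : ∀ u ∈ Set.Icc (0:ℝ) 1, toFun u 1 = u
  density_pos : ∀ u ∈ Set.Ioo (0:ℝ) 1, ∀ v ∈ Set.Ioo (0:ℝ) 1,
    0 < deriv (fun t => deriv (fun s => toFun s t) u) v

namespace SmoothBivCopula

/-- `h⁽¹⁾(u,v) = ∂C(u,v)/∂u`. -/
def h1 (C : SmoothBivCopula) (u v : ℝ) : ℝ := deriv (fun s => C.toFun s v) u

/-- `h⁽²⁾(u,v) = ∂C(u,v)/∂v`. -/
def h2 (C : SmoothBivCopula) (u v : ℝ) : ℝ := deriv (fun t => C.toFun u t) v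

/-- The copula density `c(u,v) = ∂²C/(∂u∂v)`. -/
def density (C : SmoothBivCopula) (u v : ℝ) : ℝ :=
  deriv (fun t => deriv (fun s => C.toFun s t) u) v

end SmoothBivCopula

/-- The pair of forward and backward Rosenblatt functions `(R⁽¹⁾_k, R⁽²⁾_k)` built from
h-function sequences `h1 h2 : ℕ → ℝ → ℝ → ℝ` (index `k` corresponds to copula `C_k`). -/
def rosenblattPair (h1 h2 : ℕ → ℝ → ℝ → ℝ) :
    (k : ℕ) → ((Fin k → ℝ) → ℝ → ℝ) × ((Fin k → ℝ) → ℝ → ℝ)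
  | 0 => (fun _ x => x, fun _ x => x)
  | k + 1 =>
    let P := rosenblattPair h1 h2 k
    (fun u x => h1 (k + 1) (P.2 (Fin.tail u) (u 0)) (P.1 (Fin.tail u) x),
     fun u x => h2 (k + 1) (P.2 (Fin.init u) x) (P.1 (Fin.init u) (u (Fin.last k))))

/-- Forward Rosenblatt function `R⁽¹⁾_k` of the copula sequence `C`. -/
def R1 (C : ℕ → SmoothBivCopula) (k : ℕ) : (Fin k → ℝ) → ℝ → ℝ :=
  (rosenblattPair (fun j => (C j).h1) (fun j => (C j).h2) k).1

/-- Backward Rosenblatt function `R⁽²⁾_k` of the copula sequence `C`. -/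
def R2 (C : ℕ → SmoothBivCopula) (k : ℕ) : (Fin k → ℝ) → ℝ → ℝ :=
  (rosenblattPair (fun j => (C j).h1) (fun j => (C j).h2) k).2

/-- `get u m` is the `(m+1)`-st (i.e. 0-indexed `m`-th) entry of `u`, with junk value `0`
out of range. -/
def get {n : ℕ} (u : Fin n → ℝ) (m : ℕ) : ℝ := if h : m < n then u ⟨m, h⟩ else 0

/-- `seg u a len` is the length-`len` slice of `u` starting at 0-indexed position `a`. -/
def seg {n : ℕ} (u : Fin n → ℝ) (a len : ℕ) : Fin len → ℝ := fun i => get u (a + i)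

/-- The s-vine density of order `n`:
`c_(n)(u₁,…,uₙ) = ∏_{k=1}^{n-1} ∏_{j=k+1}^{n} c_k(R⁽²⁾_{k-1}(u_{[j-k+1,j-1]}, u_{j-k}), R⁽¹⁾_{k-1}(u_{[j-k+1,j-1]}, u_j))`
(1-indexed). -/
def svineDensity (C : ℕ → SmoothBivCopula) (n : ℕ) (u : Fin n → ℝ) : ℝ :=
  ∏ k ∈ Finset.Icc 1 (n - 1), ∏ j ∈ Finset.Icc (k + 1) n,
    (C k).density (R2 C (k - 1) (seg u (j - k) (k - 1)) (get u (j - k - 1)))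
                  (R1 C (k - 1) (seg u (j - k) (k - 1)) (get u (j - 1)))

/-- The forward Rosenblatt density
`f_k(u,x) = ∏_{j=1}^{k} c_j(R⁽²⁾_{j-1}(u_{[k-j+2,k]}, u_{k-j+1}), R⁽¹⁾_{j-1}(u_{[k-j+2,k]}, x))`
(1-indexed). -/
def fden (C : ℕ → SmoothBivCopula) (k : ℕ) (u : Fin k → ℝ) (x : ℝ) : ℝ :=
  ∏ j ∈ Finset.Icc 1 k,
    (C j).density (R2 C (j - 1) (seg u (k - j + 1) (j - 1)) (get u (k - j)))
                  (R1 C (j - 1) (seg u (k - j + 1) (j - 1)) x)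

open Topology in
lemma SmoothBivCopula.h1_mem_Ioo (C : SmoothBivCopula) {u v : ℝ}
    (hu : u ∈ Set.Ioo (0:ℝ) 1) (hv : v ∈ Set.Ioo (0:ℝ) 1) :
    C.h1 u v ∈ Set.Ioo (0:ℝ) 1 := by
  set F : ℝ × ℝ → ℝ := fun p => C.toFun p.1 p.2 with hFdef
  set K : Set (ℝ × ℝ) := Set.Icc (0:ℝ) 1 ×ˢ Set.Icc (0:ℝ) 1 with hKdef
  have hKu : UniqueDiffOn ℝ K := (uniqueDiffOn_Icc one_pos).prod (uniqueDiffOn_Icc one_pos)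
  have hintK : interior K = Set.Ioo (0:ℝ) 1 ×ˢ Set.Ioo (0:ℝ) 1 := by
    rw [hKdef, interior_prod_eq, interior_Icc]
  have hF : ContDiffOn ℝ (⊤ : ℕ∞) F K := C.smooth
  have hfd : ContinuousOn (fderivWithin ℝ F K) K :=
    hF.continuousOn_fderivWithin hKu (by exact_mod_cast le_top)
  set G : ℝ → ℝ := fun t => fderivWithin ℝ F K (u, t) (1, 0) with hGdef
  have huIcc : u ∈ Set.Icc (0:ℝ) 1 := Set.Ioo_subset_Icc_self hu
  have hmaps : ∀ t ∈ Set.Icc (0:ℝ) 1, ((u, t) : ℝ × ℝ) ∈ K := fun t ht => ⟨huIcc, ht⟩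
  have hGc : ContinuousOn G (Set.Icc (0:ℝ) 1) := by
    have h1 : ContinuousOn (fun t : ℝ => fderivWithin ℝ F K (u, t)) (Set.Icc (0:ℝ) 1) :=
      hfd.comp ((Continuous.prodMk_right u).continuousOn) hmaps
    exact h1.clm_apply continuousOn_const
  have hg0 : deriv (fun s => C.toFun s 0) u = 0 := by
    have he : (fun s => C.toFun s 0) =ᶠ[𝓝 u] fun _ => (0:ℝ) := by
      filter_upwards [Ioo_mem_nhds hu.1 hu.2] with s hs
      exact C.zero_right s (Set.Ioo_subset_Icc_self hs)
    rw [he.deriv_eq, deriv_const]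
  have hg1 : deriv (fun s => C.toFun s 1) u = 1 := by
    have he : (fun s => C.toFun s 1) =ᶠ[𝓝 u] fun s => s := by
      filter_upwards [Ioo_mem_nhds hu.1 hu.2] with s hs
      exact C.one_right s (Set.Ioo_subset_Icc_self hs)
    rw [he.deriv_eq, deriv_id'']
  have hud : UniqueDiffWithinAt ℝ (Set.Icc (0:ℝ) 1) u := (uniqueDiffOn_Icc one_pos) u huIcc
  have hGbd : ∀ b : ℝ, b ∈ Set.Icc (0:ℝ) 1 →
      HasDerivWithinAt (fun s => C.toFun s b) (G b) (Set.Icc (0:ℝ) 1) u := by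
    intro b hb
    have hmem : ((u, b) : ℝ × ℝ) ∈ K := hmaps b hb
    have hdw : DifferentiableWithinAt ℝ F K (u, b) :=
      (hF.differentiableOn (by simp)) _ hmem
    have hHF : HasFDerivWithinAt F (fderivWithin ℝ F K (u, b)) K (u, b) :=
      hdw.hasFDerivWithinAt
    have hcurve : HasDerivWithinAt (fun s : ℝ => ((s, b) : ℝ × ℝ)) (1, 0)
        (Set.Icc (0:ℝ) 1) u :=
      ((hasDerivAt_id u).prodMk (hasDerivAt_const u b)).hasDerivWithinAt
    exact hHF.comp_hasDerivWithinAt u hcurve (by exact fun s hs => ⟨hs, hb⟩)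
  have hG0 : G 0 = 0 := by
    have h1 := (hGbd 0 (Set.left_mem_Icc.mpr zero_le_one)).derivWithin hud
    have h2 : HasDerivWithinAt (fun s => C.toFun s 0) 0 (Set.Icc (0:ℝ) 1) u :=
      (hasDerivWithinAt_const u (Set.Icc (0:ℝ) 1) (0:ℝ)).congr
        (fun s hs => C.zero_right s hs) (C.zero_right u huIcc)
    have h3 := h2.derivWithin hud
    exact h1.symm.trans h3
  have hG1 : G 1 = 1 := by
    have h1 := (hGbd 1 (Set.right_mem_Icc.mpr zero_le_one)).derivWithin hud
    have h2 : HasDerivWithinAt (fun s => C.toFun s 1) 1 (Set.Icc (0:ℝ) 1) u :=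
      (hasDerivWithinAt_id u (Set.Icc (0:ℝ) 1)).congr
        (fun s hs => C.one_right s hs) (C.one_right u huIcc)
    have h3 := h2.derivWithin hud
    exact h1.symm.trans h3
  have hEq : Set.EqOn (fun t => deriv (fun s => C.toFun s t) u) G (Set.Icc (0:ℝ) 1) := by
    intro t ht
    rcases ht.1.eq_or_lt with h0 | h0
    · simp only [← h0]
      rw [hg0, hG0]
    rcases ht.2.eq_or_lt with h1 | h1
    · simp only [h1]
      rw [hg1, hG1]
    · have hmemI : ((u, t) : ℝ × ℝ) ∈ interior K := by
        rw [hintK]; exact ⟨hu, h0, h1⟩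
      have hnh : K ∈ 𝓝 ((u, t) : ℝ × ℝ) := mem_interior_iff_mem_nhds.mp hmemI
      have hda : DifferentiableAt ℝ F (u, t) :=
        (hF.contDiffAt hnh).differentiableAt (by simp)
      have hHD : HasDerivAt (fun s => C.toFun s t) (fderiv ℝ F (u, t) (1, 0)) u :=
        hda.hasFDerivAt.comp_hasDerivAt (l := F) u ((hasDerivAt_id u).prodMk (hasDerivAt_const u t))
      show deriv (fun s => C.toFun s t) u = G t
      rw [hHD.deriv, hGdef]
      simp only
      rw [fderivWithin_of_mem_nhds hnh]
  have hgc : ContinuousOn (fun t => deriv (fun s => C.toFun s t) u) (Set.Icc (0:ℝ) 1) :=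
    hGc.congr hEq
  have hmono : StrictMonoOn (fun t => deriv (fun s => C.toFun s t) u) (Set.Icc (0:ℝ) 1) := by
    refine strictMonoOn_of_deriv_pos (convex_Icc 0 1) hgc (fun t ht => ?_)
    rw [interior_Icc] at ht
    exact C.density_pos u hu t ht
  constructor
  · have := hmono (Set.left_mem_Icc.mpr zero_le_one) (Set.Ioo_subset_Icc_self hv) hv.1
    simpa [hg0, SmoothBivCopula.h1] using this
  · have := hmono (Set.Ioo_subset_Icc_self hv) (Set.right_mem_Icc.mpr zero_le_one) hv.2
    simpa [hg1, SmoothBivCopula.h1] using this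

open Topology in
lemma SmoothBivCopula.h2_eq_h1 (C : SmoothBivCopula)
    (hsym : ∀ u ∈ Set.Icc (0:ℝ) 1, ∀ v ∈ Set.Icc (0:ℝ) 1, C.toFun u v = C.toFun v u)
    {a b : ℝ} (ha : a ∈ Set.Ioo (0:ℝ) 1) (hb : b ∈ Set.Icc (0:ℝ) 1) :
    C.h2 b a = C.h1 a b := by
  have he : (fun t => C.toFun b t) =ᶠ[𝓝 a] (fun t => C.toFun t b) := by
    filter_upwards [Ioo_mem_nhds ha.1 ha.2] with t ht
    exact hsym b hb t (Set.Ioo_subset_Icc_self ht)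
  exact he.deriv_eq

lemma R1_succ (C : ℕ → SmoothBivCopula) (k : ℕ) (u : Fin (k+1) → ℝ) (x : ℝ) :
    R1 C (k+1) u x
      = (C (k+1)).h1 (R2 C k (Fin.tail u) (u 0)) (R1 C k (Fin.tail u) x) := rfl

lemma R2_succ (C : ℕ → SmoothBivCopula) (k : ℕ) (u : Fin (k+1) → ℝ) (x : ℝ) :
    R2 C (k+1) u x
      = (C (k+1)).h2 (R2 C k (Fin.init u) x) (R1 C k (Fin.init u) (u (Fin.last k))) := rfl

/-- if every copula `C_k` in the sequence is exchangeable, then the backward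
Rosenblatt function applied to the reversed vector equals the forward Rosenblatt function:
`R⁽²⁾_k(ū, x) = R⁽¹⁾_k(u, x)` for all `k ≥ 1`, `u ∈ (0,1)^k`, `x ∈ (0,1)`. -/
theorem svine_rosenblatt_reversal
    (C : ℕ → SmoothBivCopula)
    (hexch : ∀ k, 1 ≤ k → ∀ u ∈ Set.Icc (0:ℝ) 1, ∀ v ∈ Set.Icc (0:ℝ) 1,
      (C k).toFun u v = (C k).toFun v u) :
    ∀ k, 1 ≤ k → ∀ u : Fin k → ℝ, (∀ i, u i ∈ Set.Ioo (0:ℝ) 1) →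
      ∀ x ∈ Set.Ioo (0:ℝ) 1,
        R2 C k (fun i => u i.rev) x = R1 C k u x := by
  have key : ∀ k, ∀ u : Fin k → ℝ, (∀ i, u i ∈ Set.Ioo (0:ℝ) 1) →
      ∀ x ∈ Set.Ioo (0:ℝ) 1,
        R2 C k (fun i => u i.rev) x = R1 C k u x ∧ R1 C k u x ∈ Set.Ioo (0:ℝ) 1 := by
    intro k
    induction k with
    | zero => exact fun u hu x hx => ⟨rfl, hx⟩
    | succ k ih =>
      intro u hu x hx
      have htail : ∀ i, Fin.tail u i ∈ Set.Ioo (0:ℝ) 1 := fun i => hu _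
      set v : Fin k → ℝ := fun i => Fin.tail u i.rev with hvdef
      have hvmem : ∀ i, v i ∈ Set.Ioo (0:ℝ) 1 := fun i => htail _
      have hvrev : (fun i => v i.rev) = Fin.tail u := by
        funext i; simp [hvdef, Fin.rev_rev]
      have hA := ih v hvmem (u 0) (hu 0)
      rw [hvrev] at hA
      -- hA.1 : R2 C k (Fin.tail u) (u 0) = R1 C k v (u 0)
      have hB := ih (Fin.tail u) htail x hx
      -- hB.1 : R2 C k (fun i => Fin.tail u i.rev) x = R1 C k (Fin.tail u) x, and dom = v
      have hBv : R2 C k v x = R1 C k (Fin.tail u) x := hB.1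
      have hinit : Fin.init (fun i : Fin (k+1) => u i.rev) = v := by
        funext i
        simp only [Fin.init, hvdef, Fin.tail]
        congr 1
        ext
        simp [Fin.rev, Fin.succ, Fin.castSucc, Fin.castAdd, Fin.castLE]
        omega
      have hlast : (fun i : Fin (k+1) => u i.rev) (Fin.last k) = u 0 := by
        simp [Fin.rev_last]
      constructor
      · rw [R2_succ, R1_succ, hinit, Fin.rev_last, hA.1, hBv]
        exact (C (k+1)).h2_eq_h1 (hexch (k+1) (Nat.le_add_left 1 k))
          hA.2 (Set.Ioo_subset_Icc_self hB.2)
      · rw [R1_succ, hA.1]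
        exact (C (k+1)).h1_mem_Ioo hA.2 hB.2
  exact fun k _ u hu x hx => (key k u hu x hx).1

end
end

section
/- Let (C_k)_{k≥1} be a sequence of smooth bivariate copulas each of which is exchangeable, i.e. C_k(u,v) = C_k(v,u) for all u,v. Then for every n ≥ 2 the s-vine density of order n is reversal-symmetric: c_{(n)}(u_1,…,u_n) = c_{(n)}(u_n,…,u_1) for all (u_1,…,u_n) ∈ (0,1)^n. -/
open MeasureTheory Set

noncomputable section

namespace SVineAux

abbrev F (C : SmoothBivCopula) : ℝ × ℝ → ℝ := fun p => C.toFun p.1 p.2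
abbrev T : Set (ℝ × ℝ) := Set.Ioo (0:ℝ) 1 ×ˢ Set.Ioo (0:ℝ) 1
abbrev S : Set (ℝ × ℝ) := Set.Icc (0:ℝ) 1 ×ˢ Set.Icc (0:ℝ) 1

lemma T_subset_S : T ⊆ S := Set.prod_mono Set.Ioo_subset_Icc_self Set.Ioo_subset_Icc_self

lemma contDiffAt_F (C : SmoothBivCopula) {p : ℝ × ℝ} (hp : p ∈ T) :
    ContDiffAt ℝ (⊤ : ℕ∞) (F C) p :=
  C.smooth.contDiffAt (mem_nhds_iff.2 ⟨T, T_subset_S, (isOpen_Ioo.prod isOpen_Ioo), hp⟩)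

lemma hasDerivAt_slice1 (C : SmoothBivCopula) {a b : ℝ} (h : (a, b) ∈ T) :
    HasDerivAt (fun s => C.toFun s b) (fderiv ℝ (F C) (a, b) (1, 0)) a := by
  have hF : DifferentiableAt ℝ (F C) (a, b) :=
    (contDiffAt_F C h).differentiableAt (by simp)
  have hγ : HasDerivAt (fun s : ℝ => (s, b)) ((1 : ℝ), (0 : ℝ)) a :=
    (hasDerivAt_id a).prodMk (hasDerivAt_const a b)
  exact hF.hasFDerivAt.comp_hasDerivAt a hγ

lemma hasDerivAt_slice2 (C : SmoothBivCopula) {a b : ℝ} (h : (a, b) ∈ T) :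
    HasDerivAt (fun t => C.toFun a t) (fderiv ℝ (F C) (a, b) (0, 1)) b := by
  have hF : DifferentiableAt ℝ (F C) (a, b) :=
    (contDiffAt_F C h).differentiableAt (by simp)
  have hγ : HasDerivAt (fun t : ℝ => (a, t)) ((0 : ℝ), (1 : ℝ)) b :=
    (hasDerivAt_const b a).prodMk (hasDerivAt_id b)
  exact hF.hasFDerivAt.comp_hasDerivAt b hγ

lemma h1_eq_fderiv (C : SmoothBivCopula) {a b : ℝ} (h : (a, b) ∈ T) :
    C.h1 a b = fderiv ℝ (F C) (a, b) (1, 0) := (hasDerivAt_slice1 C h).deriv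

lemma h2_eq_fderiv (C : SmoothBivCopula) {a b : ℝ} (h : (a, b) ∈ T) :
    C.h2 a b = fderiv ℝ (F C) (a, b) (0, 1) := (hasDerivAt_slice2 C h).deriv

/-- derivative in the first variable of a directional derivative field -/
lemma deriv_fderiv_fst (C : SmoothBivCopula) {a b : ℝ} (h : (a, b) ∈ T) (w : ℝ × ℝ) :
    deriv (fun t => fderiv ℝ (F C) (t, b) w) a
      = fderiv ℝ (fderiv ℝ (F C)) (a, b) (1, 0) w := by
  have hdf : ContDiffAt ℝ 1 (fderiv ℝ (F C)) (a, b) :=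
    (contDiffAt_F C h).fderiv_right (m := 1) (WithTop.coe_le_coe.mpr le_top)
  have hD : HasFDerivAt (fderiv ℝ (F C)) (fderiv ℝ (fderiv ℝ (F C)) (a, b)) (a, b) :=
    (hdf.differentiableAt one_ne_zero).hasFDerivAt
  have hγ : HasDerivAt (fun t : ℝ => (t, b)) ((1 : ℝ), (0 : ℝ)) a :=
    (hasDerivAt_id a).prodMk (hasDerivAt_const a b)
  have h1 : HasDerivAt (fun t => fderiv ℝ (F C) (t, b))
      (fderiv ℝ (fderiv ℝ (F C)) (a, b) (1, 0)) a := hD.comp_hasDerivAt a hγ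
  have h2 := h1.clm_apply (hasDerivAt_const a w)
  simpa using h2.deriv

lemma deriv_fderiv_snd (C : SmoothBivCopula) {a b : ℝ} (h : (a, b) ∈ T) (w : ℝ × ℝ) :
    deriv (fun t => fderiv ℝ (F C) (a, t) w) b
      = fderiv ℝ (fderiv ℝ (F C)) (a, b) (0, 1) w := by
  have hdf : ContDiffAt ℝ 1 (fderiv ℝ (F C)) (a, b) :=
    (contDiffAt_F C h).fderiv_right (m := 1) (WithTop.coe_le_coe.mpr le_top)
  have hD : HasFDerivAt (fderiv ℝ (F C)) (fderiv ℝ (fderiv ℝ (F C)) (a, b)) (a, b) :=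
    (hdf.differentiableAt one_ne_zero).hasFDerivAt
  have hγ : HasDerivAt (fun t : ℝ => (a, t)) ((0 : ℝ), (1 : ℝ)) b :=
    (hasDerivAt_const b a).prodMk (hasDerivAt_id b)
  have h1 : HasDerivAt (fun t => fderiv ℝ (F C) (a, t))
      (fderiv ℝ (fderiv ℝ (F C)) (a, b) (0, 1)) b := hD.comp_hasDerivAt b hγ
  have h2 := h1.clm_apply (hasDerivAt_const b w)
  simpa using h2.deriv

end SVineAux

namespace SVineAux

/-- exchangeability transfers to h-functions on the interior -/
lemma h1_eq_h2 (C : SmoothBivCopula)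
    (hx : ∀ u ∈ Set.Icc (0:ℝ) 1, ∀ v ∈ Set.Icc (0:ℝ) 1, C.toFun u v = C.toFun v u)
    {a b : ℝ} (ha : a ∈ Set.Ioo (0:ℝ) 1) (hb : b ∈ Set.Icc (0:ℝ) 1) :
    C.h1 a b = C.h2 b a := by
  have hev : (fun s => C.toFun s b) =ᶠ[nhds a] fun s => C.toFun b s := by
    filter_upwards [Icc_mem_nhds ha.1 ha.2] with s hs
    exact hx s hs b hb
  exact hev.deriv_eq

/-- the copula density is symmetric on the interior, by Schwarz -/
lemma density_symm (C : SmoothBivCopula)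
    (hx : ∀ u ∈ Set.Icc (0:ℝ) 1, ∀ v ∈ Set.Icc (0:ℝ) 1, C.toFun u v = C.toFun v u)
    {a b : ℝ} (ha : a ∈ Set.Ioo (0:ℝ) 1) (hb : b ∈ Set.Ioo (0:ℝ) 1) :
    C.density a b = C.density b a := by
  have hsym : IsSymmSndFDerivAt ℝ (F C) (b, a) :=
    (contDiffAt_F C ⟨hb, ha⟩).isSymmSndFDerivAt (by rw [minSmoothness_of_isRCLikeNormedField]; exact WithTop.coe_le_coe.mpr le_top)
  have e1 : C.density a b = fderiv ℝ (fderiv ℝ (F C)) (b, a) (1, 0) (0, 1) := by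
    have hev : (fun t => deriv (fun s => C.toFun s t) a)
        =ᶠ[nhds b] fun t => fderiv ℝ (F C) (t, a) (0, 1) := by
      filter_upwards [Ioo_mem_nhds hb.1 hb.2] with t ht
      have h12 : C.h1 a t = C.h2 t a := h1_eq_h2 C hx ha (Ioo_subset_Icc_self ht)
      have := h2_eq_fderiv C (a := t) (b := a) ⟨ht, ha⟩
      simpa [SmoothBivCopula.h1, SmoothBivCopula.h2] using h12.trans this
    rw [SmoothBivCopula.density, hev.deriv_eq, deriv_fderiv_fst C ⟨hb, ha⟩]
  have e2 : C.density b a = fderiv ℝ (fderiv ℝ (F C)) (b, a) (0, 1) (1, 0) := by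
    have hev : (fun t => deriv (fun s => C.toFun s t) b)
        =ᶠ[nhds a] fun t => fderiv ℝ (F C) (b, t) (1, 0) := by
      filter_upwards [Ioo_mem_nhds ha.1 ha.2] with t ht
      exact h1_eq_fderiv C (a := b) (b := t) ⟨hb, ht⟩
    rw [SmoothBivCopula.density, hev.deriv_eq, deriv_fderiv_snd C ⟨hb, ha⟩]
  rw [e1, e2, hsym.eq]

/-- the first h-function maps the open square into (0,1) -/
lemma h1_mem_Ioo (C : SmoothBivCopula) {a v : ℝ}
    (ha : a ∈ Set.Ioo (0:ℝ) 1) (hv : v ∈ Set.Ioo (0:ℝ) 1) :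
    C.h1 a v ∈ Set.Ioo (0:ℝ) 1 := by
  have hUD : UniqueDiffOn ℝ S := (uniqueDiffOn_Icc zero_lt_one).prod (uniqueDiffOn_Icc zero_lt_one)
  set G : ℝ × ℝ → (ℝ × ℝ) →L[ℝ] ℝ := fderivWithin ℝ (F C) S with hG
  set φ : ℝ → ℝ := fun t => G (a, t) (1, 0) with hφ
  -- continuity of φ on [0,1]
  have hGc : ContinuousOn G S :=
    (C.smooth.fderivWithin hUD (m := 0) (WithTop.coe_le_coe.mpr le_top)).continuousOn
  have hφc : ContinuousOn φ (Set.Icc (0:ℝ) 1) := by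
    have hline : ContinuousOn (fun t : ℝ => ((a, t) : ℝ × ℝ)) (Set.Icc (0:ℝ) 1) :=
      (continuous_const.prodMk continuous_id).continuousOn
    have : ContinuousOn (fun t : ℝ => G (a, t)) (Set.Icc (0:ℝ) 1) :=
      hGc.comp hline fun t ht => ⟨⟨ha.1.le, ha.2.le⟩, ht⟩
    exact this.clm_apply continuousOn_const
  -- φ agrees with h1 a · on the interior
  have hint : ∀ t ∈ Set.Ioo (0:ℝ) 1, φ t = C.h1 a t := by
    intro t ht
    have hmem : ((a, t) : ℝ × ℝ) ∈ T := ⟨ha, ht⟩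
    have hnh : S ∈ nhds ((a, t) : ℝ × ℝ) :=
      mem_nhds_iff.2 ⟨T, T_subset_S, isOpen_Ioo.prod isOpen_Ioo, hmem⟩
    rw [hφ]
    simp only [hG, fderivWithin_of_mem_nhds hnh]
    exact (h1_eq_fderiv C hmem).symm
  -- boundary values
  have hbdry : ∀ b ∈ Set.Icc (0:ℝ) 1, ∀ (g : ℝ → ℝ) (d : ℝ),
      (∀ s ∈ Set.Icc (0:ℝ) 1, C.toFun s b = g s) → HasDerivAt g d a → φ b = d := by
    intro b hb g d hgd hg
    have hdw : HasFDerivWithinAt (F C) (G (a, b)) S (a, b) :=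
      ((C.smooth.differentiableOn (by simp)) (a, b)
        ⟨⟨ha.1.le, ha.2.le⟩, hb⟩).hasFDerivWithinAt
    have hγ : HasDerivWithinAt (fun s : ℝ => ((s, b) : ℝ × ℝ)) ((1 : ℝ), (0 : ℝ))
        (Set.Icc (0:ℝ) 1) a :=
      ((hasDerivAt_id a).prodMk (hasDerivAt_const a b)).hasDerivWithinAt
    have hmaps : Set.MapsTo (fun s : ℝ => ((s, b) : ℝ × ℝ)) (Set.Icc (0:ℝ) 1) S :=
      fun s hs => ⟨hs, hb⟩
    have hcomp : HasDerivWithinAt (fun s => C.toFun s b) (G (a, b) (1, 0))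
        (Set.Icc (0:ℝ) 1) a := by have := hdw.comp_hasDerivWithinAt a hγ hmaps; exact this
    have hcomp' : HasDerivAt (fun s => C.toFun s b) (G (a, b) (1, 0)) a :=
      hcomp.hasDerivAt (Icc_mem_nhds ha.1 ha.2)
    have hev : (fun s => C.toFun s b) =ᶠ[nhds a] g := by
      filter_upwards [Icc_mem_nhds ha.1 ha.2] with s hs using hgd s hs
    have : HasDerivAt g (G (a, b) (1, 0)) a := hcomp'.congr_of_eventuallyEq hev.symm
    exact (this.unique hg)
  have hφ0 : φ 0 = 0 :=
    hbdry 0 (Set.left_mem_Icc.2 zero_le_one) (fun _ => 0) 0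
      (fun s hs => C.zero_right s hs) (hasDerivAt_const a 0)
  have hφ1 : φ 1 = 1 :=
    hbdry 1 (Set.right_mem_Icc.2 zero_le_one) (fun s => s) 1
      (fun s hs => C.one_right s hs) (hasDerivAt_id a)
  -- strict monotonicity
  have hmono : StrictMonoOn φ (Set.Icc (0:ℝ) 1) := by
    apply strictMonoOn_of_deriv_pos (convex_Icc 0 1) hφc
    intro t ht
    rw [interior_Icc] at ht
    have hev : φ =ᶠ[nhds t] fun t' => C.h1 a t' := by
      filter_upwards [Ioo_mem_nhds ht.1 ht.2] with t' ht' using hint t' ht'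
    have : deriv φ t = C.density a t := by
      rw [hev.deriv_eq]; rfl
    rw [this]
    exact C.density_pos a ha t ht
  have h0v : φ 0 < φ v := hmono (Set.left_mem_Icc.2 zero_le_one)
    (Ioo_subset_Icc_self hv) hv.1
  have hv1 : φ v < φ 1 := hmono (Ioo_subset_Icc_self hv)
    (Set.right_mem_Icc.2 zero_le_one) hv.2
  rw [← hint v hv]
  exact ⟨by linarith, by linarith⟩

lemma h2_eq_h1 (C : SmoothBivCopula)
    (hx : ∀ u ∈ Set.Icc (0:ℝ) 1, ∀ v ∈ Set.Icc (0:ℝ) 1, C.toFun u v = C.toFun v u)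
    {a b : ℝ} (ha : a ∈ Set.Icc (0:ℝ) 1) (hb : b ∈ Set.Ioo (0:ℝ) 1) :
    C.h2 a b = C.h1 b a := (h1_eq_h2 C hx hb ha).symm

lemma h2_mem_Ioo (C : SmoothBivCopula)
    (hx : ∀ u ∈ Set.Icc (0:ℝ) 1, ∀ v ∈ Set.Icc (0:ℝ) 1, C.toFun u v = C.toFun v u)
    {a v : ℝ} (ha : a ∈ Set.Ioo (0:ℝ) 1) (hv : v ∈ Set.Ioo (0:ℝ) 1) :
    C.h2 a v ∈ Set.Ioo (0:ℝ) 1 := by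
  rw [h2_eq_h1 C hx (Ioo_subset_Icc_self ha) hv]
  exact h1_mem_Ioo C hv ha

end SVineAux

namespace SVineAux

lemma R1_succ (C : ℕ → SmoothBivCopula) (m : ℕ) (w : Fin (m + 1) → ℝ) (x : ℝ) :
    R1 C (m + 1) w x
      = (C (m + 1)).h1 (R2 C m (Fin.tail w) (w 0)) (R1 C m (Fin.tail w) x) := rfl

lemma R2_succ (C : ℕ → SmoothBivCopula) (m : ℕ) (w : Fin (m + 1) → ℝ) (x : ℝ) :
    R2 C (m + 1) w x
      = (C (m + 1)).h2 (R2 C m (Fin.init w) x) (R1 C m (Fin.init w) (w (Fin.last m))) := rfl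

lemma tail_rev {m : ℕ} (w : Fin (m + 1) → ℝ) :
    Fin.tail (fun i => w i.rev) = fun j : Fin m => (Fin.init w) j.rev := by
  funext j
  simp only [Fin.tail, Fin.init]
  congr 1
  ext
  simp only [Fin.val_rev, Fin.val_succ, Fin.coe_castSucc]
  omega

lemma init_rev {m : ℕ} (w : Fin (m + 1) → ℝ) :
    Fin.init (fun i => w i.rev) = fun j : Fin m => (Fin.tail w) j.rev := by
  funext j
  simp only [Fin.tail, Fin.init]
  congr 1
  ext
  simp only [Fin.val_rev, Fin.val_succ, Fin.coe_castSucc]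
  omega

lemma rev_zero_eq {m : ℕ} (w : Fin (m + 1) → ℝ) :
    (fun i : Fin (m+1) => w i.rev) 0 = w (Fin.last m) := by
  simp

lemma rev_last_eq {m : ℕ} (w : Fin (m + 1) → ℝ) :
    (fun i : Fin (m+1) => w i.rev) (Fin.last m) = w 0 := by
  simp

/-- Master induction: range and reversal-swap of the Rosenblatt functions. -/
lemma rosen_main (C : ℕ → SmoothBivCopula)
    (hx : ∀ k, 1 ≤ k → ∀ u ∈ Set.Icc (0:ℝ) 1, ∀ v ∈ Set.Icc (0:ℝ) 1,
      (C k).toFun u v = (C k).toFun v u) :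
    ∀ m (w : Fin m → ℝ), (∀ i, w i ∈ Set.Ioo (0:ℝ) 1) → ∀ x ∈ Set.Ioo (0:ℝ) 1,
      (R1 C m w x ∈ Set.Ioo (0:ℝ) 1 ∧ R2 C m w x ∈ Set.Ioo (0:ℝ) 1)
      ∧ (R1 C m (fun i => w i.rev) x = R2 C m w x
        ∧ R2 C m (fun i => w i.rev) x = R1 C m w x) := by
  intro m
  induction m with
  | zero =>
    intro w hw x hx0
    exact ⟨⟨hx0, hx0⟩, rfl, rfl⟩
  | succ m ih =>
    intro w hw x hx0
    have hxm := hx (m + 1) (Nat.le_add_left 1 m)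
    have htail : ∀ i, Fin.tail w i ∈ Set.Ioo (0:ℝ) 1 := fun i => hw i.succ
    have hinit : ∀ i, Fin.init w i ∈ Set.Ioo (0:ℝ) 1 := fun i => hw i.castSucc
    obtain ⟨⟨hA1, hA2⟩, eA1, eA2⟩ := ih (Fin.tail w) htail x hx0
    obtain ⟨⟨hB1, hB2⟩, eB1, eB2⟩ := ih (Fin.tail w) htail (w 0) (hw 0)
    obtain ⟨⟨hC1, hC2⟩, eC1, eC2⟩ := ih (Fin.init w) hinit x hx0
    obtain ⟨⟨hD1, hD2⟩, eD1, eD2⟩ := ih (Fin.init w) hinit (w (Fin.last m)) (hw (Fin.last m))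
    have hr1 : R1 C (m + 1) w x ∈ Set.Ioo (0:ℝ) 1 := by
      rw [R1_succ]; exact h1_mem_Ioo (C (m + 1)) hB2 hA1
    have hr2 : R2 C (m + 1) w x ∈ Set.Ioo (0:ℝ) 1 := by
      rw [R2_succ]; exact h2_mem_Ioo (C (m + 1)) hxm hC2 hD1
    refine ⟨⟨hr1, hr2⟩, ?_, ?_⟩
    · rw [R1_succ, R2_succ, tail_rev]
      have hz : Fin.rev (0 : Fin (m + 1)) = Fin.last m := by
        ext; simp [Fin.val_rev]
      rw [hz, eD2, eC1]
      exact h1_eq_h2 (C (m + 1)) hxm hD1 (Set.Ioo_subset_Icc_self hC2)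
    · rw [R2_succ, R1_succ, init_rev]
      have hz : Fin.rev (Fin.last m) = (0 : Fin (m + 1)) := by
        ext; simp [Fin.val_rev]
      rw [hz, eA2, eB1]
      exact h2_eq_h1 (C (m + 1)) hxm (Set.Ioo_subset_Icc_self hA1) hB2

end SVineAux

namespace SVineAux

lemma get_eq {n m : ℕ} (u : Fin n → ℝ) (h : m < n) : get u m = u ⟨m, h⟩ := dif_pos h

lemma factor_rev (C : ℕ → SmoothBivCopula)
    (hx : ∀ k, 1 ≤ k → ∀ u ∈ Set.Icc (0:ℝ) 1, ∀ v ∈ Set.Icc (0:ℝ) 1,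
      (C k).toFun u v = (C k).toFun v u)
    {n k j : ℕ} (h1k : 1 ≤ k) (hk2 : k ≤ n - 1) (hj1 : k + 1 ≤ j) (hj2 : j ≤ n)
    (hn : 2 ≤ n) (u : Fin n → ℝ) (hu : ∀ i, u i ∈ Set.Ioo (0:ℝ) 1) :
    (C k).density
        (R2 C (k - 1) (seg (fun i => u i.rev) (j - k) (k - 1))
          (get (fun i => u i.rev) (j - k - 1)))
        (R1 C (k - 1) (seg (fun i => u i.rev) (j - k) (k - 1))
          (get (fun i => u i.rev) (j - 1)))
      = (C k).density
        (R2 C (k - 1) (seg u ((n + k + 1 - j) - k) (k - 1))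
          (get u ((n + k + 1 - j) - k - 1)))
        (R1 C (k - 1) (seg u ((n + k + 1 - j) - k) (k - 1))
          (get u ((n + k + 1 - j) - 1))) := by
  set w : Fin (k - 1) → ℝ := seg u (n + 1 - j) (k - 1) with hwdef
  have hw : ∀ i, w i ∈ Set.Ioo (0:ℝ) 1 := by
    intro i
    have hi := i.isLt
    show get u (n + 1 - j + (i : ℕ)) ∈ Set.Ioo (0:ℝ) 1
    rw [get_eq u (by omega)]
    exact hu _
  have hseg : seg (fun i => u i.rev) (j - k) (k - 1) = fun i => w i.rev := by
    funext i
    have hi := i.isLt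
    have hr := Fin.val_rev i
    show get (fun i => u i.rev) (j - k + (i : ℕ)) = get u (n + 1 - j + (i.rev : ℕ))
    rw [get_eq (fun i => u i.rev) (show j - k + (i : ℕ) < n by omega),
      get_eq u (show n + 1 - j + (i.rev : ℕ) < n by omega)]
    show u (Fin.rev _) = u _
    congr 1
    ext
    simp only [Fin.val_rev]
    omega
  have hg1 : get (fun i => u i.rev) (j - k - 1) = u ⟨n + k - j, by omega⟩ := by
    rw [get_eq (fun i => u i.rev) (show j - k - 1 < n by omega)]
    show u (Fin.rev _) = u _
    congr 1
    ext
    simp only [Fin.val_rev]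
    omega
  have hg2 : get (fun i => u i.rev) (j - 1) = u ⟨n - j, by omega⟩ := by
    rw [get_eq (fun i => u i.rev) (show j - 1 < n by omega)]
    show u (Fin.rev _) = u _
    congr 1
    ext
    simp only [Fin.val_rev]
    omega
  have hg3 : get u ((n + k + 1 - j) - k - 1) = u ⟨n - j, by omega⟩ := by
    rw [get_eq u (show (n + k + 1 - j) - k - 1 < n by omega)]
    congr 1
    ext
    show (n + k + 1 - j) - k - 1 = n - j
    omega
  have hg4 : get u ((n + k + 1 - j) - 1) = u ⟨n + k - j, by omega⟩ := by
    rw [get_eq u (show (n + k + 1 - j) - 1 < n by omega)]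
    congr 1
    ext
    show (n + k + 1 - j) - 1 = n + k - j
    omega
  have hg5 : (n + k + 1 - j) - k = n + 1 - j := by omega
  have hseg' : seg u ((n + k + 1 - j) - k) (k - 1) = w := by rw [hg5, hwdef]
  rw [hseg, hg1, hg2, hg3, hg4, hseg']
  obtain ⟨⟨hE1, -⟩, -, e2⟩ :=
    rosen_main C hx (k - 1) w hw (u ⟨n + k - j, by omega⟩) (hu _)
  obtain ⟨⟨-, hF2⟩, f1, -⟩ :=
    rosen_main C hx (k - 1) w hw (u ⟨n - j, by omega⟩) (hu _)
  rw [e2, f1]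
  exact density_symm (C k) (hx k h1k) hE1 hF2

end SVineAux

/-- if every copula `C_k` in the sequence is exchangeable, then the s-vine
density of every order `n ≥ 2` is reversal-symmetric:
`c_(n)(u₁,…,uₙ) = c_(n)(uₙ,…,u₁)` on `(0,1)^n`. -/
theorem svine_density_reversal_symmetric
    (C : ℕ → SmoothBivCopula)
    (hexch : ∀ k, 1 ≤ k → ∀ u ∈ Set.Icc (0:ℝ) 1, ∀ v ∈ Set.Icc (0:ℝ) 1,
      (C k).toFun u v = (C k).toFun v u) :
    ∀ n, 2 ≤ n → ∀ u : Fin n → ℝ, (∀ i, u i ∈ Set.Ioo (0:ℝ) 1) →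
      svineDensity C n u = svineDensity C n (fun i => u i.rev) := by
  intro n hn u hu
  symm
  unfold svineDensity
  refine Finset.prod_congr rfl fun k hk => ?_
  rw [Finset.mem_Icc] at hk
  refine Finset.prod_bij' (fun j _ => n + k + 1 - j) (fun j _ => n + k + 1 - j)
    ?_ ?_ ?_ ?_ ?_
  · intro a ha
    simp only [Finset.mem_Icc] at ha ⊢
    omega
  · intro a ha
    simp only [Finset.mem_Icc] at ha ⊢
    omega
  · intro a ha
    simp only [Finset.mem_Icc] at ha
    omega
  · intro a ha
    simp only [Finset.mem_Icc] at ha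
    omega
  · intro a ha
    simp only [Finset.mem_Icc] at ha
    exact SVineAux.factor_rev C hexch hk.1 hk.2 ha.1 ha.2 hn u hu

end
end

section
/- Let (α_k)_{k≥1} be real numbers with |α_k| < 1 for all k, and let R^{(1)}_k, R^{(2)}_k be the Rosenblatt functions built from the Gaussian pair copula h-functions h^{(1)}_{α_k}, h^{(2)}_{α_k}. Then for every k ≥ 1, u ∈ (0,1)^k and x ∈ (0,1), R^{(1)}_k(u, x) = Φ( (Φ⁻¹(x) − ∑_{j=1}^{k} φ_j^{(k)} Φ⁻¹(u_{k+1−j})) / σ_k ), where σ_k = ∏_{j=1}^{k} √(1−α_j²) and the coefficients φ_j^{(k)} satisfy the Durbin–Levinson recursion φ_k^{(k)} = α_k and φ_j^{(k)} = φ_j^{(k−1)} − α_k φ_{k−j}^{(k−1)} for 1 ≤ j ≤ k−1. -/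
open MeasureTheory Set

noncomputable section

/-- The standard normal distribution function `Φ`. -/
def Phi (x : ℝ) : ℝ := (Real.sqrt (2 * Real.pi))⁻¹ * ∫ t in Set.Iic x, Real.exp (-(t ^ 2) / 2)

/-- The inverse `Φ⁻¹ : (0,1) → ℝ` of the standard normal distribution function. -/
def PhiInv : ℝ → ℝ := Function.invFun Phi

/-- The h-function `h⁽¹⁾_α(u,v) = Φ((Φ⁻¹(v) − αΦ⁻¹(u))/√(1−α²))` of the Gaussian pair
copula with parameter `α`. -/
def gaussH1 (α : ℝ) (u v : ℝ) : ℝ :=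
  Phi ((PhiInv v - α * PhiInv u) / Real.sqrt (1 - α ^ 2))

/-- The h-function `h⁽²⁾_α(u,v) = h⁽¹⁾_α(v,u)` of the Gaussian pair copula. -/
def gaussH2 (α : ℝ) (u v : ℝ) : ℝ := gaussH1 α v u

/-- Forward Rosenblatt function `R⁽¹⁾_k` built from the Gaussian pair copulas with
parameters `α k`. -/
def R1g (α : ℕ → ℝ) (k : ℕ) : (Fin k → ℝ) → ℝ → ℝ :=
  (rosenblattPair (fun j => gaussH1 (α j)) (fun j => gaussH2 (α j)) k).1

/-- Backward Rosenblatt function `R⁽²⁾_k` built from the Gaussian pair copulas with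
parameters `α k`. -/
def R2g (α : ℕ → ℝ) (k : ℕ) : (Fin k → ℝ) → ℝ → ℝ :=
  (rosenblattPair (fun j => gaussH1 (α j)) (fun j => gaussH2 (α j)) k).2

/-- The Durbin–Levinson coefficients `φ_j^{(k)}`: `φ_k^{(k)} = α_k` and
`φ_j^{(k)} = φ_j^{(k−1)} − α_k φ_{k−j}^{(k−1)}` for `1 ≤ j ≤ k−1`. -/
def dlPhi (α : ℕ → ℝ) : ℕ → ℕ → ℝ
  | 0, _ => 0
  | k + 1, j =>
    if j = k + 1 then α (k + 1) else dlPhi α k j - α (k + 1) * dlPhi α k (k + 1 - j)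

/-- `σ_k = ∏_{j=1}^k √(1−α_j²)` (so `σ_0 = 1`). -/
def dlSigma (α : ℕ → ℝ) (k : ℕ) : ℝ := ∏ j ∈ Finset.Icc 1 k, Real.sqrt (1 - α j ^ 2)

lemma integrable_gauss : MeasureTheory.Integrable (fun t : ℝ => Real.exp (-(t ^ 2) / 2)) := by
  have h := integrable_exp_neg_mul_sq (by norm_num : (0:ℝ) < 1/2)
  convert h using 2 with t
  ring_nf

lemma phi_strictMono : StrictMono Phi := by
  intro x y hxy
  have hpos : (0:ℝ) < (Real.sqrt (2 * Real.pi))⁻¹ := by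
    have := Real.pi_pos
    positivity
  have hsub : ((∫ t in Set.Iic y, Real.exp (-(t ^ 2) / 2)) -
      ∫ t in Set.Iic x, Real.exp (-(t ^ 2) / 2)) = ∫ t in x..y, Real.exp (-(t ^ 2) / 2) :=
    intervalIntegral.integral_Iic_sub_Iic integrable_gauss.integrableOn integrable_gauss.integrableOn
  have hlt : (0:ℝ) < ∫ t in x..y, Real.exp (-(t ^ 2) / 2) :=
    intervalIntegral.intervalIntegral_pos_of_pos (integrable_gauss.intervalIntegrable) (fun t => Real.exp_pos _) hxy
  have : (∫ t in Set.Iic x, Real.exp (-(t ^ 2) / 2)) < ∫ t in Set.Iic y, Real.exp (-(t ^ 2) / 2) := by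
    linarith
  exact mul_lt_mul_of_pos_left this hpos

lemma phiInv_phi (y : ℝ) : PhiInv (Phi y) = y :=
  Function.leftInverse_invFun phi_strictMono.injective y


lemma get_tail {k : ℕ} (u : Fin (k+1) → ℝ) (m : ℕ) (h : m < k) :
    get (Fin.tail u) m = get u (m+1) := by
  unfold _root_.get; rw [dif_pos h, dif_pos (Nat.succ_lt_succ h)]; rfl

lemma get_init {k : ℕ} (u : Fin (k+1) → ℝ) (m : ℕ) (h : m < k) :
    get (Fin.init u) m = get u m := by
  unfold _root_.get; rw [dif_pos h, dif_pos (h.trans (Nat.lt_succ_self k))]; rfl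

lemma get_zero {k : ℕ} (u : Fin (k+1) → ℝ) : get u 0 = u 0 := by
  unfold _root_.get; rw [dif_pos (Nat.succ_pos k)]; rfl

lemma get_last {k : ℕ} (u : Fin (k+1) → ℝ) : get u k = u (Fin.last k) := by
  unfold _root_.get; rw [dif_pos (Nat.lt_succ_self k)]; rfl

lemma sum_reflect (f : ℕ → ℝ) (k : ℕ) :
    ∑ j ∈ Finset.Icc 1 k, f (k + 1 - j) = ∑ j ∈ Finset.Icc 1 k, f j := by
  refine Finset.sum_nbij' (i := fun j => k + 1 - j) (j := fun j => k + 1 - j) ?_ ?_ ?_ ?_ ?_ <;>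
    intros a ha <;> simp only [Finset.mem_Icc] at * <;> first | omega | (congr 1; omega) | rfl

lemma dlSigma_succ (α : ℕ → ℝ) (k : ℕ) :
    dlSigma α (k+1) = dlSigma α k * Real.sqrt (1 - α (k+1) ^ 2) := by
  rw [dlSigma, dlSigma, Finset.prod_Icc_succ_top (Nat.le_add_left 1 k)]

lemma dlPhi_self (α : ℕ → ℝ) (k : ℕ) : dlPhi α (k+1) (k+1) = α (k+1) := by
  rw [dlPhi, if_pos rfl]

lemma dlPhi_lt (α : ℕ → ℝ) {k j : ℕ} (h : j ≤ k) :
    dlPhi α (k+1) j = dlPhi α k j - α (k+1) * dlPhi α k (k+1-j) := by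
  rw [dlPhi, if_neg (by omega)]

lemma main (α : ℕ → ℝ) :
    ∀ k, 1 ≤ k → ∀ (u : Fin k → ℝ) (x : ℝ),
      R1g α k u x = Phi ((PhiInv x -
          ∑ j ∈ Finset.Icc 1 k, dlPhi α k j * PhiInv (get u (k - j))) / dlSigma α k) ∧
      R2g α k u x = Phi ((PhiInv x -
          ∑ j ∈ Finset.Icc 1 k, dlPhi α k j * PhiInv (get u (j - 1))) / dlSigma α k) := by
  intro k hk
  induction k, hk using Nat.le_induction with
  | base =>
    intro u x
    have h1 : R1g α 1 u x = gaussH1 (α 1) (u 0) x := rfl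
    have h2 : R2g α 1 u x = gaussH1 (α 1) (u 0) x := rfl
    rw [h1, h2, gaussH1]
    have hg : get u 0 = u 0 := get_zero u
    simp [dlSigma, dlPhi, hg]
  | succ k hk ih =>
    intro u x
    have e1 : R1g α (k+1) u x =
        gaussH1 (α (k+1)) (R2g α k (Fin.tail u) (u 0)) (R1g α k (Fin.tail u) x) := rfl
    have e2 : R2g α (k+1) u x =
        gaussH2 (α (k+1)) (R2g α k (Fin.init u) x)
          (R1g α k (Fin.init u) (u (Fin.last k))) := rfl
    -- common rewrites for the RHS of both statements
    have hsig := dlSigma_succ α k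
    constructor
    · -- R1 part
      have hA := (ih (Fin.tail u) x).1
      have hB := (ih (Fin.tail u) (u 0)).2
      have rA : ∑ j ∈ Finset.Icc 1 k, dlPhi α k j * PhiInv (get (Fin.tail u) (k - j))
          = ∑ j ∈ Finset.Icc 1 k, dlPhi α k j * PhiInv (get u (k + 1 - j)) := by
        refine Finset.sum_congr rfl (fun j hj => ?_)
        simp only [Finset.mem_Icc] at hj
        rw [get_tail u (k - j) (by omega), show k - j + 1 = k + 1 - j from by omega]
      have rB : ∑ j ∈ Finset.Icc 1 k, dlPhi α k j * PhiInv (get (Fin.tail u) (j - 1))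
          = ∑ j ∈ Finset.Icc 1 k, dlPhi α k j * PhiInv (get u j) := by
        refine Finset.sum_congr rfl (fun j hj => ?_)
        simp only [Finset.mem_Icc] at hj
        rw [get_tail u (j - 1) (by omega), show j - 1 + 1 = j from by omega]
      rw [e1, hA, hB, rA, rB, gaussH1, phiInv_phi, phiInv_phi, hsig,
        Finset.sum_Icc_succ_top (Nat.le_add_left 1 k), dlPhi_self,
        show k + 1 - (k + 1) = 0 from by omega, get_zero]
      have rC : ∑ j ∈ Finset.Icc 1 k, dlPhi α (k+1) j * PhiInv (get u (k + 1 - j))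
          = (∑ j ∈ Finset.Icc 1 k, dlPhi α k j * PhiInv (get u (k + 1 - j)))
            - α (k+1) * ∑ j ∈ Finset.Icc 1 k, dlPhi α k j * PhiInv (get u j) := by
        rw [← sum_reflect (fun m => dlPhi α k m * PhiInv (get u m)) k, Finset.mul_sum,
          ← Finset.sum_sub_distrib]
        refine Finset.sum_congr rfl (fun j hj => ?_)
        simp only [Finset.mem_Icc] at hj
        rw [dlPhi_lt α hj.2]
        ring
      rw [rC]
      congr 1
      ring
    · -- R2 part
      have hA := (ih (Fin.init u) x).2
      have hB := (ih (Fin.init u) (u (Fin.last k))).1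
      have rA : ∑ j ∈ Finset.Icc 1 k, dlPhi α k j * PhiInv (get (Fin.init u) (j - 1))
          = ∑ j ∈ Finset.Icc 1 k, dlPhi α k j * PhiInv (get u (j - 1)) := by
        refine Finset.sum_congr rfl (fun j hj => ?_)
        simp only [Finset.mem_Icc] at hj
        rw [get_init u (j - 1) (by omega)]
      have rB : ∑ j ∈ Finset.Icc 1 k, dlPhi α k j * PhiInv (get (Fin.init u) (k - j))
          = ∑ j ∈ Finset.Icc 1 k, dlPhi α k j * PhiInv (get u (k - j)) := by
        refine Finset.sum_congr rfl (fun j hj => ?_)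
        simp only [Finset.mem_Icc] at hj
        rw [get_init u (k - j) (by omega)]
      rw [e2, gaussH2, hA, hB, rA, rB, gaussH1, phiInv_phi, phiInv_phi, hsig,
        Finset.sum_Icc_succ_top (Nat.le_add_left 1 k), dlPhi_self,
        show k + 1 - 1 = k from by omega, get_last]
      have rC : ∑ j ∈ Finset.Icc 1 k, dlPhi α (k+1) j * PhiInv (get u (j - 1))
          = (∑ j ∈ Finset.Icc 1 k, dlPhi α k j * PhiInv (get u (j - 1)))
            - α (k+1) * ∑ j ∈ Finset.Icc 1 k, dlPhi α k j * PhiInv (get u (k - j)) := by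
        rw [← sum_reflect (fun m => dlPhi α k m * PhiInv (get u (k - m))) k, Finset.mul_sum,
          ← Finset.sum_sub_distrib]
        refine Finset.sum_congr rfl (fun j hj => ?_)
        simp only [Finset.mem_Icc] at hj
        rw [dlPhi_lt α hj.2, show k - (k + 1 - j) = j - 1 from by omega]
        ring
      rw [rC]
      congr 1
      ring

/-- explicit form of the forward Rosenblatt functions of a Gaussian pair
copula sequence: `R⁽¹⁾_k(u,x) = Φ((Φ⁻¹(x) − ∑_{j=1}^k φ_j^{(k)} Φ⁻¹(u_{k+1−j}))/σ_k)`. -/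
theorem gaussian_forward_rosenblatt
    (α : ℕ → ℝ) (hα : ∀ k, 1 ≤ k → |α k| < 1) :
    ∀ k, 1 ≤ k → ∀ u : Fin k → ℝ, (∀ i, u i ∈ Set.Ioo (0:ℝ) 1) →
      ∀ x ∈ Set.Ioo (0:ℝ) 1,
        R1g α k u x =
          Phi ((PhiInv x - ∑ j ∈ Finset.Icc 1 k, dlPhi α k j * PhiInv (get u (k - j))) /
            dlSigma α k) := by
  intro k hk u _ x _
  exact (main α k hk u x).1

end
end

section
/- Let α_k = 1/(k+1) for all k ≥ 1. Define σ_0 = 1 and σ_k = ∏_{j=1}^{k} √(1−α_j²); define φ_j^{(k)} by φ_k^{(k)} = α_k and φ_j^{(k)} = φ_j^{(k−1)} − α_k φ_{k−j}^{(k−1)} for 1 ≤ j ≤ k−1; and define ψ_j^{(k)} by ψ_0^{(0)} = 1, ψ_0^{(k)} = σ_k for k ≥ 1, and ψ_j^{(k)} = ∑_{i=1}^{j} φ_i^{(k)} ψ_{j−i}^{(k−i)} for 1 ≤ j ≤ k. Then ψ_j^{(k)} = σ_{k−j}/(k+2−j) for all k ≥ 1 and all 1 ≤ j ≤ k. -/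
noncomputable section

/-- The coefficients `ψ_j^{(k)}`: `ψ_0^{(0)} = 1`, `ψ_0^{(k)} = σ_k` for `k ≥ 1`, and
`ψ_j^{(k)} = ∑_{i=1}^j φ_i^{(k)} ψ_{j−i}^{(k−i)}` for `1 ≤ j ≤ k`. -/
def dlPsi (α : ℕ → ℝ) : ℕ → ℕ → ℝ
  | k, 0 => dlSigma α k
  | k, j + 1 => ∑ i ∈ Finset.range (j + 1), dlPhi α k (i + 1) * dlPsi α (k - (i + 1)) (j - i)
termination_by k j => j
decreasing_by simp_wf <;> omega

/-!
When `1/α_{k+1} = 1/α_k + 1`, as for `α_k = 1/(k+1)`, the Durbin–Levinson recursion keeps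
each row constant: `φ_j^{(k)} = α_k` for all `1 ≤ j ≤ k`. The `ψ` recursion then reads
`ψ_{j+1}^{(k)} = α_k (∑_{i<j} ψ_{j-i}^{(k-i-1)} + σ_{k-j-1})`, and by strong induction on `j` every
summand equals `σ_{k-j-1}/d` with `d = k + 1 - j`; since `j + d = k + 1`, the total is `σ_{k-j-1}/d`.
-/

section

variable {α : ℕ → ℝ}

theorem dlPhi_eq_of_mul_one_add (hα : ∀ k, 1 ≤ k → α (k + 1) * (1 + α k) = α k) :
    ∀ k j, 1 ≤ j → j ≤ k → dlPhi α k j = α k := by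
  intro k
  induction k with
  | zero => intro j h1 h2; omega
  | succ k ih =>
    intro j h1 h2
    rw [dlPhi]
    split_ifs with hj
    · rfl
    · rw [ih j h1 (by omega), ih (k + 1 - j) (by omega) (by omega)]
      linear_combination -hα k (by omega)

theorem dlPsi_succ_of_dlPhi_eq {k j : ℕ} {c x : ℝ}
    (hφ : ∀ i, 1 ≤ i → i ≤ j + 1 → dlPhi α k i = c)
    (hψ : ∀ i < j, dlPsi α (k - (i + 1)) (j - i) = x) :
    dlPsi α k (j + 1) = c * (j * x + dlSigma α (k - (j + 1))) := by
  rw [dlPsi, Finset.sum_range_succ, Nat.sub_self, dlPsi, hφ (j + 1) (by omega) le_rfl,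
    Finset.sum_congr rfl fun i hi => by
      rw [hφ (i + 1) (by omega) (Nat.succ_le_succ (Finset.mem_range.mp hi).le), hψ i (Finset.mem_range.mp hi)],
    Finset.sum_const, Finset.card_range, nsmul_eq_mul]
  ring

end

theorem dlPhi_inv_succ :
    ∀ k j, 1 ≤ j → j ≤ k → dlPhi (fun m => 1 / ((m : ℝ) + 1)) k j = 1 / ((k : ℝ) + 1) :=
  dlPhi_eq_of_mul_one_add fun k _ => by push_cast; field_simp

/-- for `α_k = 1/(k+1)` the moving-average coefficients satisfy
`ψ_j^{(k)} = σ_{k−j}/(k+2−j)` for every `k ≥ 1` and `1 ≤ j ≤ k`. -/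
theorem dlPsi_of_inv_succ :
    ∀ k, 1 ≤ k → ∀ j, 1 ≤ j → j ≤ k →
      dlPsi (fun m => 1 / ((m : ℝ) + 1)) k j =
        dlSigma (fun m => 1 / ((m : ℝ) + 1)) (k - j) / ((k + 2 - j : ℕ) : ℝ) := by
  intro k _ j
  induction j using Nat.strong_induction_on generalizing k with
  | _ j ih =>
  intro hj hjk
  obtain ⟨j, rfl⟩ := Nat.exists_eq_add_of_le' hj
  set σ := dlSigma (fun m => 1 / ((m : ℝ) + 1)) (k - (j + 1))
  set d : ℝ := ((k + 2 - (j + 1) : ℕ) : ℝ)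
  have hφ i (h1 : 1 ≤ i) (h2 : i ≤ j + 1) := dlPhi_inv_succ k i h1 (h2.trans hjk)
  have hψ : ∀ i < j, dlPsi (fun m => 1 / ((m : ℝ) + 1)) (k - (i + 1)) (j - i) = σ / d := by
    intro i hi
    rw [ih (j - i) (by omega) (k - (i + 1)) (by omega) (by omega) (by omega)]
    have e1 : k - (i + 1) - (j - i) = k - (j + 1) := by omega
    have e2 : k - (i + 1) + 2 - (j - i) = k + 2 - (j + 1) := by omega
    rw [e1, e2]
  rw [dlPsi_succ_of_dlPhi_eq (x := σ / d) hφ hψ]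
  have hjd : (j : ℝ) + d = k + 1 := by
    simp only [d]
    exact_mod_cast (show j + (k + 2 - (j + 1)) = k + 1 by omega)
  have hd : d ≠ 0 := Nat.cast_ne_zero.mpr (by omega)
  field_simp
  linear_combination σ * hjd
end
end

section
/- Let p ≥ 1 and let (C_k)_{k≥1} be a sequence of smooth bivariate copulas truncated at order p, i.e. C_k(u,v) = uv (the independence copula) for all k > p. Then for every k ≥ p, every u ∈ (0,1)^k and every x ∈ (0,1), the forward Rosenblatt function depends only on the last p components of u: R^{(1)}_k(u, x) = R^{(1)}_p((u_{k−p+1},…,u_k), x). -/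
open MeasureTheory Set

noncomputable section

-- mixed partial derivative symmetry on an open set
lemma mixed_deriv_symm {f : ℝ × ℝ → ℝ} {U : Set (ℝ × ℝ)} (hU : IsOpen U)
    (hf : ContDiffOn ℝ (⊤ : ℕ∞) f U) {a b : ℝ} (hab : (a, b) ∈ U) :
    deriv (fun s => deriv (fun t => f (s, t)) b) a
      = deriv (fun t => deriv (fun s => f (s, t)) a) b := by
  have hdf : ∀ q ∈ U, DifferentiableAt ℝ f q := fun q hq =>
    (hf.contDiffAt (hU.mem_nhds hq)).differentiableAt (by simp)
  have hf' : ContDiffOn ℝ (⊤ : ℕ∞) (fderiv ℝ f) U := hf.fderiv_of_isOpen hU (by exact_mod_cast le_top)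
  have hdf' : DifferentiableAt ℝ (fderiv ℝ f) (a, b) :=
    (hf'.contDiffAt (hU.mem_nhds hab)).differentiableAt (by simp)
  set e1 : ℝ × ℝ := (1, 0)
  set e2 : ℝ × ℝ := (0, 1)
  -- first partials as fderiv applications
  have key1 : ∀ s t : ℝ, (s, t) ∈ U →
      HasDerivAt (fun s' => f (s', t)) (fderiv ℝ f (s, t) e1) s := by
    intro s t h
    have hc : HasDerivAt (fun s' : ℝ => (s', t)) e1 s := by
      simpa using HasDerivAt.prodMk (hasDerivAt_id s) (hasDerivAt_const s t)
    exact (hdf _ h).hasFDerivAt.comp_hasDerivAt s hc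
  have key2 : ∀ s t : ℝ, (s, t) ∈ U →
      HasDerivAt (fun t' => f (s, t')) (fderiv ℝ f (s, t) e2) t := by
    intro s t h
    have hc : HasDerivAt (fun t' : ℝ => (s, t')) e2 t := by
      simpa using HasDerivAt.prodMk (hasDerivAt_const t s) (hasDerivAt_id t)
    exact (hdf _ h).hasFDerivAt.comp_hasDerivAt t hc
  -- second derivative
  set f'' := fderiv ℝ (fderiv ℝ f) (a, b) with hf''
  have happ : ∀ v : ℝ × ℝ, HasFDerivAt (fun q => fderiv ℝ f q v)
      ((ContinuousLinearMap.apply ℝ ℝ v).comp f'') (a, b) :=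
    fun v => (ContinuousLinearMap.apply ℝ ℝ v).hasFDerivAt.comp _ hdf'.hasFDerivAt
  have hLHS : deriv (fun s => deriv (fun t => f (s, t)) b) a = f'' e1 e2 := by
    have hev : ∀ᶠ s in nhds a, (s, b) ∈ U :=
      (Continuous.continuousAt (by continuity : Continuous fun s : ℝ => (s, b))).preimage_mem_nhds
        (hU.mem_nhds hab)
    have heq : (fun s => deriv (fun t => f (s, t)) b)
        =ᶠ[nhds a] fun s => fderiv ℝ f (s, b) e2 := by
      filter_upwards [hev] with s hs using (key2 s b hs).deriv
    rw [heq.deriv_eq]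
    have hc : HasDerivAt (fun s : ℝ => (s, b)) e1 a := by
      simpa using HasDerivAt.prodMk (hasDerivAt_id a) (hasDerivAt_const a b)
    have := ((happ e2).comp_hasDerivAt a hc).deriv
    simpa [Function.comp_def] using this
  have hRHS : deriv (fun t => deriv (fun s => f (s, t)) a) b = f'' e2 e1 := by
    have hev : ∀ᶠ t in nhds b, (a, t) ∈ U :=
      (Continuous.continuousAt (by continuity : Continuous fun t : ℝ => (a, t))).preimage_mem_nhds
        (hU.mem_nhds hab)
    have heq : (fun t => deriv (fun s => f (s, t)) a)
        =ᶠ[nhds b] fun t => fderiv ℝ f (a, t) e1 := by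
      filter_upwards [hev] with t ht using (key1 a t ht).deriv
    rw [heq.deriv_eq]
    have hc : HasDerivAt (fun t : ℝ => (a, t)) e2 b := by
      simpa using HasDerivAt.prodMk (hasDerivAt_const b a) (hasDerivAt_id b)
    have := ((happ e1).comp_hasDerivAt b hc).deriv
    simpa [Function.comp_def] using this
  have hsym : f'' e1 e2 = f'' e2 e1 := by
    have hev : ∀ᶠ y in nhds (a, b), HasFDerivAt f (fderiv ℝ f y) y := by
      filter_upwards [hU.mem_nhds hab] with y hy using (hdf y hy).hasFDerivAt
    exact second_derivative_symmetric_of_eventually hev hdf'.hasFDerivAt e1 e2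
  rw [hLHS, hRHS, hsym]


namespace SmoothBivCopula

lemma h1_mem (C : SmoothBivCopula) {u v : ℝ} (hu : u ∈ Set.Ioo (0:ℝ) 1)
    (hv : v ∈ Set.Ioo (0:ℝ) 1) : C.h1 u v ∈ Set.Ioo (0:ℝ) 1 := by
  set S : Set (ℝ × ℝ) := Set.Icc (0:ℝ) 1 ×ˢ Set.Icc (0:ℝ) 1 with hS
  set f : ℝ × ℝ → ℝ := fun q => C.toFun q.1 q.2 with hfdef
  have hud : UniqueDiffOn ℝ S := (uniqueDiffOn_Icc one_pos).prod (uniqueDiffOn_Icc one_pos)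
  have hL : ContinuousOn (fderivWithin ℝ f S) S :=
    C.smooth.continuousOn_fderivWithin hud (by exact_mod_cast le_top)
  set g : ℝ → ℝ := fun t => fderivWithin ℝ f S (u, t) (1, 0) with hgdef
  have huI : u ∈ Set.Icc (0:ℝ) 1 := Set.Ioo_subset_Icc_self hu
  have hnu : Set.Icc (0:ℝ) 1 ∈ nhds u := Icc_mem_nhds hu.1 hu.2
  have hgc : ContinuousOn g (Set.Icc 0 1) := by
    have hcurve : ContinuousOn (fun t : ℝ => (u, t)) (Set.Icc 0 1) :=
      (Continuous.prodMk_right u).continuousOn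
    have hmaps : Set.MapsTo (fun t : ℝ => (u, t)) (Set.Icc 0 1) S :=
      fun t ht => ⟨huI, ht⟩
    exact (hL.comp hcurve hmaps).clm_apply continuousOn_const
  have key : ∀ t ∈ Set.Icc (0:ℝ) 1, C.h1 u t = g t := by
    intro t ht
    have hmem : (u, t) ∈ S := ⟨huI, ht⟩
    have hF : HasFDerivWithinAt f (fderivWithin ℝ f S (u, t)) S (u, t) :=
      ((C.smooth.differentiableOn (by simp)) _ hmem).hasFDerivWithinAt
    have hc : HasDerivWithinAt (fun s : ℝ => (s, t)) ((1:ℝ), (0:ℝ)) (Set.Icc 0 1) u := by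
      have : HasDerivAt (fun s : ℝ => (s, t)) ((1:ℝ), (0:ℝ)) u := by
        simpa using HasDerivAt.prodMk (hasDerivAt_id u) (hasDerivAt_const u t)
      exact this.hasDerivWithinAt
    have hcomp := hF.comp_hasDerivWithinAt u hc (fun s hs => show (s, t) ∈ S from ⟨hs, ht⟩)
    have : HasDerivAt (fun s => C.toFun s t) (g t) u :=
      (hcomp.hasDerivAt hnu)
    exact this.deriv
  have g0 : g 0 = 0 := by
    rw [← key 0 (by norm_num)]
    have heq : (fun s => C.toFun s 0) =ᶠ[nhds u] fun _ => (0:ℝ) := by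
      filter_upwards [hnu] with s hs using C.zero_right s hs
    simp [SmoothBivCopula.h1, heq.deriv_eq]
  have g1 : g 1 = 1 := by
    rw [← key 1 (by norm_num)]
    have heq : (fun s => C.toFun s 1) =ᶠ[nhds u] fun s => s := by
      filter_upwards [hnu] with s hs using C.one_right s hs
    simp [SmoothBivCopula.h1, heq.deriv_eq]
  have hmono : StrictMonoOn g (Set.Icc 0 1) := by
    apply strictMonoOn_of_deriv_pos (convex_Icc 0 1) hgc
    intro t ht
    rw [interior_Icc] at ht
    have hnt : Set.Icc (0:ℝ) 1 ∈ nhds t := Icc_mem_nhds ht.1 ht.2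
    have heq : g =ᶠ[nhds t] fun t' => C.h1 u t' := by
      filter_upwards [hnt] with t' ht' using (key t' ht').symm
    rw [heq.deriv_eq]
    exact C.density_pos u hu t ht
  have hvI : v ∈ Set.Icc (0:ℝ) 1 := Set.Ioo_subset_Icc_self hv
  constructor
  · rw [key v hvI, ← g0]; exact hmono (by norm_num) hvI hv.1
  · rw [key v hvI, ← g1]; exact hmono hvI (by norm_num) hv.2

lemma h2_mem (C : SmoothBivCopula) {u v : ℝ} (hu : u ∈ Set.Ioo (0:ℝ) 1)
    (hv : v ∈ Set.Ioo (0:ℝ) 1) : C.h2 u v ∈ Set.Ioo (0:ℝ) 1 := by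
  set S : Set (ℝ × ℝ) := Set.Icc (0:ℝ) 1 ×ˢ Set.Icc (0:ℝ) 1 with hS
  set f : ℝ × ℝ → ℝ := fun q => C.toFun q.1 q.2 with hfdef
  have hud : UniqueDiffOn ℝ S := (uniqueDiffOn_Icc one_pos).prod (uniqueDiffOn_Icc one_pos)
  have hL : ContinuousOn (fderivWithin ℝ f S) S :=
    C.smooth.continuousOn_fderivWithin hud (by exact_mod_cast le_top)
  set g : ℝ → ℝ := fun s => fderivWithin ℝ f S (s, v) (0, 1) with hgdef
  have hvI : v ∈ Set.Icc (0:ℝ) 1 := Set.Ioo_subset_Icc_self hv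
  have hnv : Set.Icc (0:ℝ) 1 ∈ nhds v := Icc_mem_nhds hv.1 hv.2
  have hgc : ContinuousOn g (Set.Icc 0 1) := by
    have hcurve : ContinuousOn (fun s : ℝ => (s, v)) (Set.Icc 0 1) :=
      (continuous_id.prodMk continuous_const).continuousOn
    have hmaps : Set.MapsTo (fun s : ℝ => (s, v)) (Set.Icc 0 1) S :=
      fun s hs => ⟨hs, hvI⟩
    exact (hL.comp hcurve hmaps).clm_apply continuousOn_const
  have key : ∀ s ∈ Set.Icc (0:ℝ) 1, C.h2 s v = g s := by
    intro s hs
    have hmem : (s, v) ∈ S := ⟨hs, hvI⟩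
    have hF : HasFDerivWithinAt f (fderivWithin ℝ f S (s, v)) S (s, v) :=
      ((C.smooth.differentiableOn (by simp)) _ hmem).hasFDerivWithinAt
    have hc : HasDerivWithinAt (fun t : ℝ => (s, t)) ((0:ℝ), (1:ℝ)) (Set.Icc 0 1) v := by
      have : HasDerivAt (fun t : ℝ => (s, t)) ((0:ℝ), (1:ℝ)) v := by
        simpa using HasDerivAt.prodMk (hasDerivAt_const v s) (hasDerivAt_id v)
      exact this.hasDerivWithinAt
    have hcomp := hF.comp_hasDerivWithinAt v hc (fun t ht => show (s, t) ∈ S from ⟨hs, ht⟩)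
    have : HasDerivAt (fun t => C.toFun s t) (g s) v :=
      (hcomp.hasDerivAt hnv)
    exact this.deriv
  have g0 : g 0 = 0 := by
    rw [← key 0 (by norm_num)]
    have heq : (fun t => C.toFun 0 t) =ᶠ[nhds v] fun _ => (0:ℝ) := by
      filter_upwards [hnv] with t ht using C.zero_left t ht
    simp [SmoothBivCopula.h2, heq.deriv_eq]
  have g1 : g 1 = 1 := by
    rw [← key 1 (by norm_num)]
    have heq : (fun t => C.toFun 1 t) =ᶠ[nhds v] fun t => t := by
      filter_upwards [hnv] with t ht using C.one_left t ht
    simp [SmoothBivCopula.h2, heq.deriv_eq]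
  have hmono : StrictMonoOn g (Set.Icc 0 1) := by
    apply strictMonoOn_of_deriv_pos (convex_Icc 0 1) hgc
    intro s hs
    rw [interior_Icc] at hs
    have hns : Set.Icc (0:ℝ) 1 ∈ nhds s := Icc_mem_nhds hs.1 hs.2
    have heq : g =ᶠ[nhds s] fun s' => C.h2 s' v := by
      filter_upwards [hns] with s' hs' using (key s' hs').symm
    rw [heq.deriv_eq]
    have hswap : deriv (fun s' => deriv (fun t => f (s', t)) v) s
        = deriv (fun t => deriv (fun s' => f (s', t)) s) v := by
      have hfint : ContDiffOn ℝ (⊤ : ℕ∞) f (Set.Ioo (0:ℝ) 1 ×ˢ Set.Ioo (0:ℝ) 1) :=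
        C.smooth.mono (Set.prod_mono Set.Ioo_subset_Icc_self Set.Ioo_subset_Icc_self)
      exact mixed_deriv_symm (isOpen_Ioo.prod isOpen_Ioo) hfint ⟨hs, hv⟩
    have : deriv (fun s' => C.h2 s' v) s = C.density s v := by
      simpa [SmoothBivCopula.h2, SmoothBivCopula.density] using hswap
    rw [this]
    exact C.density_pos s hs v hv
  have huI : u ∈ Set.Icc (0:ℝ) 1 := Set.Ioo_subset_Icc_self hu
  constructor
  · rw [key u huI, ← g0]; exact hmono (by norm_num) huI hu.1
  · rw [key u huI, ← g1]; exact hmono huI (by norm_num) hu.2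

end SmoothBivCopula

lemma rosenblatt_mem (C : ℕ → SmoothBivCopula) :
    ∀ k (u : Fin k → ℝ), (∀ i, u i ∈ Set.Ioo (0:ℝ) 1) → ∀ x ∈ Set.Ioo (0:ℝ) 1,
      R1 C k u x ∈ Set.Ioo (0:ℝ) 1 ∧ R2 C k u x ∈ Set.Ioo (0:ℝ) 1 := by
  intro k
  induction k with
  | zero => intro u hu x hx; exact ⟨hx, hx⟩
  | succ k ih =>
    intro u hu x hx
    have htail : ∀ i, Fin.tail u i ∈ Set.Ioo (0:ℝ) 1 := fun i => hu i.succ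
    have hinit : ∀ i, Fin.init u i ∈ Set.Ioo (0:ℝ) 1 := fun i => hu i.castSucc
    constructor
    · rw [R1_succ]
      exact (C (k+1)).h1_mem ((ih _ htail _ (hu 0)).2) ((ih _ htail _ hx).1)
    · rw [R2_succ]
      exact (C (k+1)).h2_mem ((ih _ hinit _ hx).2) ((ih _ hinit _ (hu (Fin.last k))).1)

/-- if the copula sequence is truncated at order `p` (i.e. `C_k(u,v) = uv`
for `k > p`), then for every `k ≥ p` the forward Rosenblatt function depends only on the
last `p` components of its vector argument:
`R⁽¹⁾_k(u,x) = R⁽¹⁾_p((u_{k−p+1},…,u_k), x)`. -/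
theorem forward_rosenblatt_truncated
    (C : ℕ → SmoothBivCopula) (p : ℕ) (hp : 1 ≤ p)
    (htrunc : ∀ k, p < k → ∀ u ∈ Set.Icc (0:ℝ) 1, ∀ v ∈ Set.Icc (0:ℝ) 1,
      (C k).toFun u v = u * v) :
    ∀ k, ∀ hk : p ≤ k, ∀ u : Fin k → ℝ, (∀ i, u i ∈ Set.Ioo (0:ℝ) 1) →
      ∀ x ∈ Set.Ioo (0:ℝ) 1,
        R1 C k u x =
          R1 C p (fun i : Fin p => u ⟨k - p + (i : ℕ), by have := i.isLt; omega⟩) x := by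
  intro k hk
  induction k, hk using Nat.le_induction with
  | base =>
    intro u hu x hx
    congr 1
    funext i
    exact congrArg u (Fin.ext (by simp)).symm
  | succ n hn ih =>
    intro u hu x hx
    have htail : ∀ i, Fin.tail u i ∈ Set.Ioo (0:ℝ) 1 := fun i => hu i.succ
    have hmem := rosenblatt_mem C n (Fin.tail u) htail
    have ha := (hmem (u 0) (hu 0)).2
    have hb := (hmem x hx).1
    have hind : R1 C (n+1) u x = R1 C n (Fin.tail u) x := by
      rw [R1_succ]
      show deriv (fun s => (C (n+1)).toFun s (R1 C n (Fin.tail u) x))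
          (R2 C n (Fin.tail u) (u 0)) = _
      have heq : (fun s => (C (n+1)).toFun s (R1 C n (Fin.tail u) x))
          =ᶠ[nhds (R2 C n (Fin.tail u) (u 0))]
            fun s => s * (R1 C n (Fin.tail u) x) := by
        filter_upwards [Icc_mem_nhds ha.1 ha.2] with s hs using
          htrunc (n+1) (by omega) s hs _ (Set.Ioo_subset_Icc_self hb)
      rw [heq.deriv_eq]
      simpa using ((hasDerivAt_id (R2 C n (Fin.tail u) (u 0))).mul_const
        (R1 C n (Fin.tail u) x)).deriv
    rw [hind, ih (Fin.tail u) htail x hx]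
    congr 1
    funext i
    show u _ = u _
    exact congrArg u (Fin.ext (by simp [Fin.tail]; omega))

end
end
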